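/- arXiv:0901.2090 — 2 statements merged into one kernel-verified Lean document; each statement's English description precedes it below -/
import Mathlib

section
/- Let G be a bipartite graph in which every left vertex has degree exactly 4 and every left vertex subset of size 4 has at least 11 right neighbors. If additionally G has no 4-cycles, then every left vertex subset of size 5 has at least 12 right neighbors. -/
/-!
If a set `S` of left vertices of degree at most `d` had at most `m` neighbours while every
`S \ {v}` has at least `m`, then deleting any vertex would leave `N(S)` unchanged, so every
right vertex of `N(S)` would have two neighbours in `S`. Double counting the edges between `S`
and `N(S)` then gives `2 m ≤ 2 |N(S)| ≤ d |S|`. For `d = 4`, `|S| = 5`, `m = 11` this is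
`22 ≤ 20`.
-/

namespace Finset

variable {V C : Type*} [DecidableEq V] [DecidableEq C] {N : V → Finset C} {S : Finset V}

theorem biUnion_erase_eq_of_card_le (hS : ∀ v ∈ S, #(S.biUnion N) ≤ #((S.erase v).biUnion N)) :
    ∀ v ∈ S, (S.erase v).biUnion N = S.biUnion N := fun v hv =>
  eq_of_subset_of_card_le (biUnion_subset_biUnion_of_subset_left _ (erase_subset _ _)) (hS v hv)

theorem two_le_card_filter_mem_of_biUnion_erase_eq
    (hS : ∀ v ∈ S, (S.erase v).biUnion N = S.biUnion N) :
    ∀ c ∈ S.biUnion N, 2 ≤ #{v ∈ S | c ∈ N v} := by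
  intro c hc
  obtain ⟨v, hv, hcv⟩ := mem_biUnion.mp hc
  obtain ⟨u, hu, hcu⟩ := mem_biUnion.mp ((hS v hv).symm ▸ hc)
  obtain ⟨huv, huS⟩ := mem_erase.mp hu
  calc 2 = #{u, v} := (card_pair huv).symm
    _ ≤ #{w ∈ S | c ∈ N w} := card_le_card <| by
      rw [insert_subset_iff, singleton_subset_iff, mem_filter, mem_filter]
      exact ⟨⟨huS, hcu⟩, hv, hcv⟩

theorem two_mul_card_biUnion_le_of_biUnion_erase_eq {d : ℕ} (hdeg : ∀ v ∈ S, #(N v) ≤ d)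
    (hS : ∀ v ∈ S, (S.erase v).biUnion N = S.biUnion N) :
    #(S.biUnion N) * 2 ≤ #S * d :=
  card_mul_le_card_mul' (fun v c => c ∈ N v) (two_le_card_filter_mem_of_biUnion_erase_eq hS)
    fun v hv => (card_le_card fun _ hc => (mem_filter.mp hc).2).trans (hdeg v hv)

theorem lt_card_biUnion_of_le_card_biUnion_erase {d m : ℕ} (hne : S.Nonempty)
    (hdeg : ∀ v ∈ S, #(N v) ≤ d) (hexp : ∀ v ∈ S, m ≤ #((S.erase v).biUnion N))
    (hdm : #S * d < 2 * m) :
    m < #(S.biUnion N) := by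
  obtain ⟨v, hv⟩ := hne
  have hm : m ≤ #(S.biUnion N) := (hexp v hv).trans <|
    card_le_card (biUnion_subset_biUnion_of_subset_left _ (erase_subset _ _))
  by_contra! hle
  have hcover := biUnion_erase_eq_of_card_le fun w hw => hle.trans (hexp w hw)
  have := two_mul_card_biUnion_le_of_biUnion_erase_eq hdeg hcover
  omega

end Finset

open Finset in
theorem stmt_2_general {V C : Type*} [DecidableEq V] [DecidableEq C]
    (N : V → Finset C)
    (hdeg : ∀ v, (N v).card = 4)
    (hexp4 : ∀ S : Finset V, S.card = 4 → 11 ≤ (S.biUnion N).card) :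
    ∀ S : Finset V, S.card = 5 → 12 ≤ (S.biUnion N).card := by
  intro S hS
  refine lt_card_biUnion_of_le_card_biUnion_erase (d := 4) (card_pos.mp (by omega))
    (fun v _ => (hdeg v).le) (fun v hv => hexp4 _ ?_) (by omega)
  rw [card_erase_of_mem hv, hS]

/-- 4-left-regular, no 4-cycles, and the 4→11 expansion condition imply the
5→12 expansion condition. -/
theorem stmt_2 {V C : Type*} [DecidableEq V] [DecidableEq C]
    (N : V → Finset C)
    (hdeg : ∀ v, (N v).card = 4)
    (hexp4 : ∀ S : Finset V, S.card = 4 → 11 ≤ (S.biUnion N).card)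
    (h4cyc : ∀ u w : V, u ≠ w → (N u ∩ N w).card ≤ 1) :
    ∀ S : Finset V, S.card = 5 → 12 ≤ (S.biUnion N).card :=
  stmt_2_general N hdeg hexp4
end

section
/- Let G be a bipartite graph in which every left vertex has degree exactly 4 and every left vertex subset of size 6 has at least 14 right neighbors. Let v1, v2, v3 be distinct left vertices with |N({v1,v2,v3})| = 10, let u be a left vertex outside {v1,v2,v3} with exactly 3 neighbors in C1 = N({v1,v2,v3}), and let w be a left vertex outside {v1,v2,v3,u} with exactly 2 neighbors in C1 that shares one of its two neighbors outside C1 with u. Then there is no further left vertex u' ∉ {v1,v2,v3,u,w} having exactly 3 neighbors in C1. -/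
/-- In a 4-left-regular bipartite graph satisfying the 6→14 expansion
condition, let v1,v2,v3 be distinct with |N({v1,v2,v3})| = 10, let u be a
T_3^1 vertex (exactly 3 neighbors in C1 = N({v1,v2,v3})) and let w be a T_2^2
vertex (exactly 2 neighbors in C1) sharing one of its neighbors outside C1 with
u. Then there is no further vertex u' outside {v1,v2,v3,u,w} with exactly 3
neighbors in C1. -/
theorem stmt_17 {V C : Type*} [DecidableEq V] [DecidableEq C]
    (N : V → Finset C)
    (hdeg : ∀ v, (N v).card = 4)
    (hexp6 : ∀ S : Finset V, S.card = 6 → 14 ≤ (S.biUnion N).card)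
    (v1 v2 v3 : V) (h12 : v1 ≠ v2) (h13 : v1 ≠ v3) (h23 : v2 ≠ v3)
    (hC1 : (({v1, v2, v3} : Finset V).biUnion N).card = 10)
    (u : V) (hu : u ∉ ({v1, v2, v3} : Finset V))
    (hu3 : (N u ∩ ({v1, v2, v3} : Finset V).biUnion N).card = 3)
    (w : V) (hw : w ∉ ({v1, v2, v3, u} : Finset V))
    (hw2 : (N w ∩ ({v1, v2, v3} : Finset V).biUnion N).card = 2)
    (hshare : ∃ c : C, c ∈ N w \ ({v1, v2, v3} : Finset V).biUnion N ∧ c ∈ N u) :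
    ¬ ∃ u' : V, u' ∉ ({v1, v2, v3, u, w} : Finset V) ∧
      (N u' ∩ ({v1, v2, v3} : Finset V).biUnion N).card = 3 := by
  rintro ⟨u', hu', hu'3⟩
  set C1 := (({v1, v2, v3} : Finset V).biUnion N) with hC1def
  obtain ⟨c, hcw, hcu⟩ := hshare
  simp only [Finset.mem_insert, Finset.mem_singleton, not_or] at hu hw hu'
  obtain ⟨hu1, hu2, hu3'⟩ := hu
  obtain ⟨hw1, hw2', hw3, hwu⟩ := hw
  obtain ⟨g1, g2, g3, g4, g5⟩ := hu'
  have hScard : ({v1, v2, v3, u, w, u'} : Finset V).card = 6 := by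
    rw [Finset.card_insert_of_notMem (by
          simp only [Finset.mem_insert, Finset.mem_singleton]; push_neg
          exact ⟨h12, h13, Ne.symm hu1, Ne.symm hw1, Ne.symm g1⟩),
        Finset.card_insert_of_notMem (by
          simp only [Finset.mem_insert, Finset.mem_singleton]; push_neg
          exact ⟨h23, Ne.symm hu2, Ne.symm hw2', Ne.symm g2⟩),
        Finset.card_insert_of_notMem (by
          simp only [Finset.mem_insert, Finset.mem_singleton]; push_neg
          exact ⟨Ne.symm hu3', Ne.symm hw3, Ne.symm g3⟩),
        Finset.card_insert_of_notMem (by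
          simp only [Finset.mem_insert, Finset.mem_singleton]; push_neg
          exact ⟨Ne.symm hwu, Ne.symm g4⟩),
        Finset.card_insert_of_notMem (by
          simp only [Finset.mem_singleton]; exact Ne.symm g5),
        Finset.card_singleton]
  have hexp := hexp6 _ hScard
  -- the target superset
  have hccw : c ∈ N w := (Finset.mem_sdiff.mp hcw).1
  have hcC1 : c ∉ C1 := (Finset.mem_sdiff.mp hcw).2
  set E : Finset C := (N w \ C1).erase c with hE
  have hsub : ({v1, v2, v3, u, w, u'} : Finset V).biUnion N ⊆
      C1 ∪ (N u \ C1) ∪ (N u' \ C1) ∪ E := by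
    intro x hx
    simp only [Finset.mem_biUnion, Finset.mem_insert, Finset.mem_singleton] at hx
    obtain ⟨y, hy, hxy⟩ := hx
    simp only [Finset.mem_union, Finset.mem_sdiff, hE, Finset.mem_erase]
    rcases hy with rfl | rfl | rfl | rfl | rfl | rfl
    · exact Or.inl (Or.inl (Or.inl (Finset.mem_biUnion.mpr ⟨y, by simp, hxy⟩)))
    · exact Or.inl (Or.inl (Or.inl (Finset.mem_biUnion.mpr ⟨y, by simp, hxy⟩)))
    · exact Or.inl (Or.inl (Or.inl (Finset.mem_biUnion.mpr ⟨y, by simp, hxy⟩)))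
    · by_cases hxC : x ∈ C1
      · exact Or.inl (Or.inl (Or.inl hxC))
      · exact Or.inl (Or.inl (Or.inr ⟨hxy, hxC⟩))
    · by_cases hxC : x ∈ C1
      · exact Or.inl (Or.inl (Or.inl hxC))
      · by_cases hxc : x = c
        · exact Or.inl (Or.inl (Or.inr ⟨hxc ▸ hcu, hxc ▸ hcC1⟩))
        · exact Or.inr ⟨hxc, hxy, hxC⟩
    · by_cases hxC : x ∈ C1
      · exact Or.inl (Or.inl (Or.inl hxC))
      · exact Or.inl (Or.inr ⟨hxy, hxC⟩)
  have hcardsub := Finset.card_le_card hsub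
  have hNu : (N u \ C1).card = 1 := by
    have h := Finset.card_sdiff_add_card_inter (N u) C1
    rw [hdeg u, hu3] at h
    omega
  have hNu' : (N u' \ C1).card = 1 := by
    have h := Finset.card_sdiff_add_card_inter (N u') C1
    rw [hdeg u', hu'3] at h
    omega
  have hNw : (N w \ C1).card = 2 := by
    have h := Finset.card_sdiff_add_card_inter (N w) C1
    rw [hdeg w, hw2] at h
    omega
  have hEcard : E.card = 1 := by
    rw [hE, Finset.card_erase_of_mem hcw, hNw]
  have b1 := Finset.card_union_le (C1 ∪ (N u \ C1) ∪ (N u' \ C1)) E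
  have b2 := Finset.card_union_le (C1 ∪ (N u \ C1)) (N u' \ C1)
  have b3 := Finset.card_union_le C1 (N u \ C1)
  omega
end
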